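/- arXiv:2301.00926 — 2 statements merged into one kernel-verified Lean document; each statement's English description precedes it below -/
import Mathlib

section
/- The number of permutations in S_n avoiding the pattern 231 equals the n-th Catalan number. -/
/-- A word contains the pattern 231: there are positions `i < j < k`
with `w k < w i < w j`. -/
def Contains231 (w : List ℕ) : Prop :=
  ∃ i j k : ℕ, i < j ∧ j < k ∧ k < w.length ∧
    w.getD k 0 < w.getD i 0 ∧ w.getD i 0 < w.getD j 0

/-- A word avoids the pattern 231. -/
def Avoids231 (w : List ℕ) : Prop := ¬ Contains231 w

/-- `w` is (the one-line notation of) a permutation of `{1, ..., n}`. -/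
def IsPermWord (n : ℕ) (w : List ℕ) : Prop := w.Perm (List.range' 1 n)

open List Finset

/-! A 231-avoiding rearrangement of a strictly increasing list `t ++ [m]` is a word `u ++ m :: v`
where `u` and `v` avoid 231 and every entry of `u` lies below every entry of `v` (otherwise
`a, m, b` is a 231). Hence `u` and `v` rearrange a prefix of `t` and the complementary suffix,
and the count satisfies the Catalan recurrence `C (n + 1) = ∑_{k + l = n} C k * C l`. -/

theorem contains231_iff_sublist {w : List ℕ} :
    Contains231 w ↔ ∃ x y z, [y, z, x] <+ w ∧ x < y ∧ y < z := by
  constructor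
  · rintro ⟨i, j, k, hij, hjk, hk, hki, hij'⟩
    rw [getD_eq_getElem _ _ hk, getD_eq_getElem _ _ (by omega)] at hki
    rw [getD_eq_getElem _ _ (by omega), getD_eq_getElem _ _ (by omega)] at hij'
    refine ⟨w[k], w[i], w[j], ?_, hki, hij'⟩
    rw [sublist_iff_exists_fin_orderEmbedding_get_eq]
    refine ⟨OrderEmbedding.ofStrictMono ![⟨i, by omega⟩, ⟨j, by omega⟩, ⟨k, hk⟩] ?_, ?_⟩
    · rw [Fin.strictMono_iff_lt_succ]
      intro a; fin_cases a <;> simpa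
    · intro a; fin_cases a <;> rfl
  · rintro ⟨x, y, z, hsub, hxy, hyz⟩
    obtain ⟨f, hf⟩ := sublist_iff_exists_fin_orderEmbedding_get_eq.mp hsub
    have hget (a : Fin 3) : w.getD (f a) 0 = [y, z, x].get a := by
      rw [hf, getD_eq_getElem _ _ (f a).isLt]; rfl
    refine ⟨f 0, f 1, f 2, f.strictMono Fin.zero_lt_one, f.strictMono (by simp [Fin.lt_def]),
      (f 2).isLt, ?_, ?_⟩
    · rw [hget, hget]; exact hxy
    · rw [hget, hget]; exact hyz

theorem Avoids231.sublist {v w : List ℕ} (hw : Avoids231 w) (h : v <+ w) : Avoids231 v := by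
  rw [Avoids231, contains231_iff_sublist] at hw ⊢
  rintro ⟨x, y, z, hsub, hxy, hyz⟩
  exact hw ⟨x, y, z, hsub.trans h, hxy, hyz⟩

theorem avoids231_append {u v : List ℕ} (huv : ∀ a ∈ u, ∀ b ∈ v, a ≤ b) :
    Avoids231 (u ++ v) ↔ Avoids231 u ∧ Avoids231 v := by
  refine ⟨fun h => ⟨h.sublist (sublist_append_left u v), h.sublist (sublist_append_right u v)⟩, ?_⟩
  rintro ⟨hu, hv⟩
  rw [Avoids231, contains231_iff_sublist] at hu hv ⊢
  rintro ⟨x, y, z, hsub, hxy, hyz⟩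
  obtain ⟨l₁, l₂, heq, h₁, h₂⟩ := sublist_append_iff.mp hsub
  rcases l₁ with _ | ⟨a, _ | ⟨b, _ | ⟨c, _ | ⟨d, l₁⟩⟩⟩⟩ <;>
    simp only [cons_append, nil_append, cons.injEq, nil_eq, reduceCtorEq, and_false] at heq
  · subst heq
    exact hv ⟨x, y, z, h₂, hxy, hyz⟩
  · obtain ⟨rfl, rfl⟩ := heq
    exact (huv y (h₁.subset (by simp)) x (h₂.subset (by simp))).not_gt hxy
  · obtain ⟨rfl, rfl, rfl⟩ := heq
    exact (huv y (h₁.subset (by simp)) x (h₂.subset (by simp))).not_gt hxy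
  · obtain ⟨rfl, rfl, rfl, -⟩ := heq
    exact hu ⟨x, y, z, h₁, hxy, hyz⟩

theorem avoids231_cons_of_forall_le {m : ℕ} {v : List ℕ} (hv : ∀ b ∈ v, b ≤ m) :
    Avoids231 (m :: v) ↔ Avoids231 v := by
  refine ⟨fun h => h.sublist (sublist_cons_self m v), ?_⟩
  rw [Avoids231, Avoids231, contains231_iff_sublist, contains231_iff_sublist]
  rintro hv' ⟨x, y, z, hsub, hxy, hyz⟩
  rcases sublist_cons_iff.mp hsub with hsub | ⟨r, heq, hr⟩
  · exact hv' ⟨x, y, z, hsub, hxy, hyz⟩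
  · obtain ⟨rfl, rfl⟩ := cons_eq_cons.mp heq
    exact (hv z (hr.subset (by simp))).not_gt hyz

theorem avoids231_append_cons_iff {u v : List ℕ} {m : ℕ} (hu : ∀ a ∈ u, a < m)
    (hv : ∀ b ∈ v, b ≤ m) :
    Avoids231 (u ++ m :: v) ↔ Avoids231 u ∧ Avoids231 v ∧ ∀ a ∈ u, ∀ b ∈ v, a ≤ b := by
  constructor
  · intro h
    refine ⟨h.sublist (sublist_append_left _ _),
      h.sublist ((sublist_cons_self m v).trans (sublist_append_right _ _)), ?_⟩
    intro a ha b hb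
    by_contra hba
    rw [Avoids231, contains231_iff_sublist] at h
    refine h ⟨b, a, m, ?_, not_le.mp hba, hu a ha⟩
    exact (singleton_sublist.mpr ha).append (cons_sublist_cons.mpr (singleton_sublist.mpr hb))
  · rintro ⟨hu', hv', huv⟩
    have huv' : ∀ a ∈ u, ∀ b ∈ m :: v, a ≤ b := by
      intro a ha b hb
      rcases mem_cons.mp hb with rfl | hb
      exacts [(hu a ha).le, huv a ha b hb]
    rw [avoids231_append huv', avoids231_cons_of_forall_le hv]
    exact ⟨hu', hv'⟩

theorem List.perm_take_drop_of_forall_le {α : Type*} [LinearOrder α] {s u v : List α}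
    (hs : s.SortedLE) (huv : ∀ a ∈ u, ∀ b ∈ v, a ≤ b) (h : u ++ v ~ s) :
    u ~ s.take u.length ∧ v ~ s.drop u.length := by
  have hu := mergeSort_perm u (· ≤ ·)
  have hv := mergeSort_perm v (· ≤ ·)
  have hsorted : (u.mergeSort (· ≤ ·) ++ v.mergeSort (· ≤ ·)).SortedLE :=
    (pairwise_append.mpr ⟨sortedLE_mergeSort.pairwise, sortedLE_mergeSort.pairwise,
      fun a ha b hb => huv a (hu.subset ha) b (hv.subset hb)⟩).sortedLE
  have heq := Perm.eq_of_sortedLE hsorted hs ((hu.append hv).trans h)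
  rw [← heq, take_left' hu.length_eq, drop_left' hu.length_eq]
  exact ⟨hu.symm, hv.symm⟩

open scoped Classical in
noncomputable def permsAvoiding231 (s : List ℕ) : Finset (List ℕ) :=
  {w ∈ s.permutations.toFinset | Avoids231 w}

theorem mem_permsAvoiding231 {s w : List ℕ} :
    w ∈ permsAvoiding231 s ↔ w ~ s ∧ Avoids231 w := by
  simp [permsAvoiding231, mem_permutations]

theorem permsAvoiding231_nil : permsAvoiding231 [] = {[]} := by
  ext w
  simp only [mem_permsAvoiding231, perm_nil, Finset.mem_singleton, and_iff_left_iff_imp]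
  rintro rfl ⟨-, -, k, -, -, hk, -⟩
  exact Nat.not_lt_zero k hk

/-- The index `(k, l)` records the lengths of the two parts, so that counting by `card_sigma`
produces the sum over `antidiagonal` of `catalan_succ'`. -/
noncomputable def splitsAvoiding231 (t : List ℕ) :
    Finset ((_ : ℕ × ℕ) × List ℕ × List ℕ) :=
  (antidiagonal t.length).sigma fun p =>
    permsAvoiding231 (t.take p.1) ×ˢ permsAvoiding231 (t.drop p.1)

theorem mem_splitsAvoiding231 {t u v : List ℕ} {p : ℕ × ℕ} :
    ⟨p, u, v⟩ ∈ splitsAvoiding231 t ↔ p.1 + p.2 = t.length ∧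
      (u ~ t.take p.1 ∧ Avoids231 u) ∧ v ~ t.drop p.1 ∧ Avoids231 v := by
  simp only [splitsAvoiding231, Finset.mem_sigma, Finset.mem_product,
    HasAntidiagonal.mem_antidiagonal, mem_permsAvoiding231]

theorem injOn_splitsAvoiding231 {t : List ℕ} {m : ℕ} (htm : ∀ x ∈ t, x < m) :
    Set.InjOn (fun x : (_ : ℕ × ℕ) × List ℕ × List ℕ => x.2.1 ++ m :: x.2.2)
      (splitsAvoiding231 t) := by
  have hmem : ∀ x ∈ splitsAvoiding231 t,
      m ∉ x.2.1 ∧ m ∉ x.2.2 ∧ x.1 = (x.2.1.length, x.2.2.length) := by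
    rintro ⟨⟨k, l⟩, u, v⟩ hx
    obtain ⟨hkl, ⟨hut, -⟩, hvt, -⟩ := mem_splitsAvoiding231.mp hx
    refine ⟨fun h => lt_irrefl m (htm m ((take_sublist k t).subset (hut.subset h))),
      fun h => lt_irrefl m (htm m ((drop_sublist k t).subset (hvt.subset h))), ?_⟩
    simp only [hut.length_eq, hvt.length_eq, length_take, length_drop, Prod.mk.injEq]
    omega
  rintro ⟨p, u, v⟩ hx ⟨p', u', v'⟩ hx' heq
  obtain ⟨hmu, hmv, hp⟩ := hmem _ hx
  obtain ⟨-, -, hp'⟩ := hmem _ hx'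
  obtain ⟨rfl, -, rfl⟩ := (append_cons_inj_of_notMem hmu hmv).mp heq
  dsimp only at hp hp'
  rw [hp, hp']

theorem permsAvoiding231_append_singleton {t : List ℕ} {m : ℕ} (ht : t.SortedLE)
    (htm : ∀ x ∈ t, x < m) :
    permsAvoiding231 (t ++ [m]) =
      (splitsAvoiding231 t).image fun x => x.2.1 ++ m :: x.2.2 := by
  ext w
  simp only [Finset.mem_image, Sigma.exists, Prod.exists, mem_splitsAvoiding231,
    mem_permsAvoiding231]
  constructor
  · rintro ⟨hw, hav⟩
    obtain ⟨u, v, rfl⟩ :=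
      append_of_mem (hw.symm.subset (mem_append_right t (List.mem_singleton_self m)))
    have huv : u ++ v ~ t :=
      (perm_cons m).mp (perm_middle.symm.trans (hw.trans (perm_append_singleton m t)))
    have hu : ∀ a ∈ u, a < m := fun a ha => htm a (huv.subset (mem_append_left v ha))
    have hv : ∀ b ∈ v, b ≤ m := fun b hb => (htm b (huv.subset (mem_append_right u hb))).le
    obtain ⟨hu', hv', hle⟩ := (avoids231_append_cons_iff hu hv).mp hav
    obtain ⟨hut, hvt⟩ := perm_take_drop_of_forall_le ht hle huv
    refine ⟨u.length, v.length, u, v, ⟨?_, ⟨hut, hu'⟩, hvt, hv'⟩, rfl⟩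
    rw [← huv.length_eq, length_append]
  · rintro ⟨k, l, u, v, ⟨-, ⟨hut, hu'⟩, hvt, hv'⟩, rfl⟩
    have huv : u ++ v ~ t := by simpa only [take_append_drop] using hut.append hvt
    have hu : ∀ a ∈ u, a < m := fun a ha => htm a (huv.subset (mem_append_left v ha))
    have hv : ∀ b ∈ v, b ≤ m := fun b hb => (htm b (huv.subset (mem_append_right u hb))).le
    have hle : ∀ a ∈ u, ∀ b ∈ v, a ≤ b := by
      have := ht.pairwise
      rw [← take_append_drop k t, pairwise_append] at this
      exact fun a ha b hb => this.2.2 a (hut.subset ha) b (hvt.subset hb)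
    exact ⟨perm_middle.trans ((huv.cons m).trans (perm_append_singleton m t).symm),
      (avoids231_append_cons_iff hu hv).mpr ⟨hu', hv', hle⟩⟩

theorem card_permsAvoiding231_of_sortedLT {s : List ℕ} (hs : s.SortedLT) :
    #(permsAvoiding231 s) = catalan s.length := by
  induction hn : s.length using Nat.strong_induction_on generalizing s with | _ n ih
  rcases eq_nil_or_concat' s with rfl | ⟨t, m, rfl⟩
  · rw [← hn, permsAvoiding231_nil, card_singleton, length_nil, catalan_zero]
  subst hn
  obtain ⟨ht, -, htm⟩ := pairwise_append.mp hs.pairwise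
  replace htm : ∀ x ∈ t, x < m := fun x hx => htm x hx m (List.mem_singleton_self m)
  rw [permsAvoiding231_append_singleton ht.sortedLT.sortedLE htm,
    card_image_of_injOn (injOn_splitsAvoiding231 htm), splitsAvoiding231, card_sigma,
    length_append, length_singleton, catalan_succ']
  refine sum_congr rfl fun p hp => ?_
  rw [HasAntidiagonal.mem_antidiagonal] at hp
  rw [card_product, ih _ ?_ (ht.sublist (take_sublist _ _)).sortedLT rfl,
    ih _ ?_ (ht.sublist (drop_sublist _ _)).sortedLT rfl, length_take, length_drop]
  · rw [Nat.min_eq_left (by omega), show t.length - p.1 = p.2 by omega]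
  all_goals simp only [length_append, length_take, length_drop, length_singleton]; omega

theorem card_avoids231_eq_catalan (n : ℕ) :
    {w : List ℕ | IsPermWord n w ∧ Avoids231 w}.ncard =
      (2 * n).choose n / (n + 1) := by
  have hset : {w | IsPermWord n w ∧ Avoids231 w} = (permsAvoiding231 (range' 1 n) : Set _) :=
    Set.ext fun _ => mem_permsAvoiding231.symm
  rw [hset, Set.ncard_coe_finset,
    card_permsAvoiding231_of_sortedLT (sortedLT_range' 1 n one_ne_zero), length_range', catalan_eq_centralBinom_div, Nat.centralBinom_eq_two_mul_choose]
end

section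
/- West's stack-sorting map weakly decreases the number of inversions: for every permutation p in S_n, the number of inversions of s(p) is at most the number of inversions of p, with equality if and only if p is the identity. -/
/-- West's stack-sorting map, implemented with a fuel parameter.
`stackSortAux (fuel+1) w` splits `w = L ++ [m] ++ R` at (the unique, for words with
distinct letters, occurrence of) its maximum letter `m` and returns `s L ++ s R ++ [m]`. -/
def stackSortAux : ℕ → List ℕ → List ℕ
  | 0, _ => []
  | _ + 1, [] => []
  | fuel + 1, w =>
    let m := w.foldr max 0
    let L := w.takeWhile (fun x => x ≠ m)
    let R := (w.dropWhile (fun x => x ≠ m)).tail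
    stackSortAux fuel L ++ stackSortAux fuel R ++ [m]

/-- West's stack-sorting map `s` on words of natural numbers. -/
def stackSort (w : List ℕ) : List ℕ := stackSortAux w.length w

/-- The number of inversions of a word: pairs of positions `i < j` with `w i > w j`. -/
noncomputable def inversions (w : List ℕ) : ℕ :=
  {p : ℕ × ℕ | p.1 < p.2 ∧ p.2 < w.length ∧ w.getD p.2 0 < w.getD p.1 0}.ncard

/-!
Split a word `w = L ++ m :: R` at the first occurrence of its maximum `m`, so that
`s w = s L ++ s R ++ [m]`. The inversions of `w` are those inside `L`, inside `R`, between `L` and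
`R`, and the pairs `(m, y)` with `y ∈ R`, `y < m`. In `s w` the letter `m` comes last and creates
none, and since `s` only permutes letters, the inversions between `s L` and `s R` are as many as
between `L` and `R`. Hence the loss `inv w - inv (s w)` is the number of letters of `R` below `m`
plus the losses on `L` and `R`, which are nonnegative by induction. It vanishes only if `L` is
sorted and `R` consists of copies of `m`, i.e. if `w` is sorted; for a permutation, if `w` is the
identity.
-/

namespace List

variable {α : Type*} [LinearOrder α]

theorem exists_eq_append_max_cons {w : List α} (hw : w ≠ []) :
    ∃ L m R, w = L ++ m :: R ∧ (∀ y ∈ L, y < m) ∧ ∀ y ∈ R, y ≤ m := by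
  obtain ⟨m, hm, hmax⟩ := w.toFinset.exists_max_image id (by simpa using hw)
  obtain ⟨L, R, rfl, hmL⟩ := eq_append_cons_of_mem (mem_toFinset.1 hm)
  refine ⟨L, m, R, rfl, fun y hy => ?_, fun y hy => hmax y (by simp [hy])⟩
  exact lt_of_le_of_ne (hmax y (by simp [hy])) (ne_of_mem_of_not_mem hy hmL)

@[elab_as_elim]
theorem induction_append_max_cons {P : List α → Prop} (nil : P [])
    (append_cons : ∀ L m R, (∀ y ∈ L, y < m) → (∀ y ∈ R, y ≤ m) → P L → P R → P (L ++ m :: R))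
    (w : List α) : P w := by
  induction h : w.length using Nat.strong_induction_on generalizing w with
  | _ n ih =>
    rcases eq_or_ne w [] with rfl | hw
    · exact nil
    obtain ⟨L, m, R, rfl, hL, hR⟩ := exists_eq_append_max_cons hw
    simp only [length_append, length_cons] at h
    exact append_cons L m R hL hR (ih _ (by omega) L rfl) (ih _ (by omega) R rfl)

end List

theorem foldr_max_append_cons {L R : List ℕ} {m : ℕ} (hL : ∀ y ∈ L, y ≤ m)
    (hR : ∀ y ∈ R, y ≤ m) : (L ++ m :: R).foldr max 0 = m := by
  refine le_antisymm (List.max_le_of_forall_le _ _ ?_) (List.le_max_of_le (by simp) le_rfl)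
  simp only [List.mem_append, List.mem_cons]
  rintro y (hy | rfl | hy)
  exacts [hL y hy, le_rfl, hR y hy]

theorem stackSortAux_succ_append_cons (f : ℕ) {L R : List ℕ} {m : ℕ} (hL : ∀ y ∈ L, y < m)
    (hR : ∀ y ∈ R, y ≤ m) :
    stackSortAux (f + 1) (L ++ m :: R) = stackSortAux f L ++ stackSortAux f R ++ [m] := by
  have hLm : ∀ y ∈ L, y ≠ m := fun y hy => (hL y hy).ne
  rw [stackSortAux.eq_3 _ _ (by simp), foldr_max_append_cons (fun y hy => (hL y hy).le) hR,
    List.takeWhile_append_of_pos (by simpa using hLm),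
    List.dropWhile_append_of_pos (by simpa using hLm)]
  simp

theorem stackSortAux_eq_stackSort (w : List ℕ) {f : ℕ} (hf : w.length ≤ f) :
    stackSortAux f w = stackSort w := by
  induction w using List.induction_append_max_cons generalizing f with
  | nil => cases f <;> rfl
  | append_cons L m R hL hR ihL ihR =>
    have hlen : (L ++ m :: R).length = L.length + R.length + 1 := by simp; omega
    obtain ⟨f, rfl⟩ := Nat.exists_eq_add_one_of_ne_zero (by omega : f ≠ 0)
    rw [stackSort, hlen, stackSortAux_succ_append_cons _ hL hR,
      stackSortAux_succ_append_cons _ hL hR, ihL (by omega), ihR (by omega), ihL (by omega),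
      ihR (by omega)]

theorem stackSort_append_cons {L R : List ℕ} {m : ℕ} (hL : ∀ y ∈ L, y < m)
    (hR : ∀ y ∈ R, y ≤ m) :
    stackSort (L ++ m :: R) = stackSort L ++ stackSort R ++ [m] := by
  rw [← stackSortAux_eq_stackSort _ (f := L.length + R.length + 1) (by simp; omega),
    stackSortAux_succ_append_cons _ hL hR, stackSortAux_eq_stackSort _ (by omega),
    stackSortAux_eq_stackSort _ (by omega)]

theorem perm_stackSort (w : List ℕ) : (stackSort w).Perm w := by
  induction w using List.induction_append_max_cons with
  | nil => rfl
  | append_cons L m R hL hR ihL ihR =>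
    rw [stackSort_append_cons hL hR]
    exact ((ihL.append ihR).append_right [m]).trans
      ((List.perm_append_singleton m _).trans List.perm_middle.symm)

theorem inversions_eq_sum (w : List ℕ) :
    inversions w = ∑ i ∈ Finset.range w.length, ∑ j ∈ Finset.range w.length,
      if i < j ∧ w.getD j 0 < w.getD i 0 then 1 else 0 := by
  have hset : {p : ℕ × ℕ | p.1 < p.2 ∧ p.2 < w.length ∧ w.getD p.2 0 < w.getD p.1 0} =
      ↑((Finset.range w.length ×ˢ Finset.range w.length).filter
        fun p : ℕ × ℕ => p.1 < p.2 ∧ w.getD p.2 0 < w.getD p.1 0) := by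
    ext ⟨i, j⟩
    simp only [Set.mem_ofPred_eq, Finset.coe_filter, Finset.mem_product, Finset.mem_range]
    grind
  rw [inversions, hset, Set.ncard_coe_finset, Finset.card_filter, Finset.sum_product]

theorem countP_eq_sum_range (p : ℕ → Bool) (w : List ℕ) :
    w.countP p = ∑ k ∈ Finset.range w.length, if p (w.getD k 0) then 1 else 0 := by
  induction w with
  | nil => simp
  | cons x xs ih =>
    rw [List.countP_cons, List.length_cons, Finset.sum_range_succ']
    simp only [List.getD_cons_succ, List.getD_cons_zero, ← ih]

@[simp]
theorem inversions_nil : inversions [] = 0 := by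
  simp [inversions_eq_sum]

theorem inversions_cons (x : ℕ) (xs : List ℕ) :
    inversions (x :: xs) = xs.countP (· < x) + inversions xs := by
  have hfirst : ∑ j ∈ Finset.range (xs.length + 1),
      (if 0 < j ∧ (x :: xs).getD j 0 < (x :: xs).getD 0 0 then 1 else 0) =
        xs.countP (· < x) := by
    rw [Finset.sum_range_succ', countP_eq_sum_range]
    simp
  have hrest (i : ℕ) : ∑ j ∈ Finset.range (xs.length + 1),
      (if i + 1 < j ∧ (x :: xs).getD j 0 < (x :: xs).getD (i + 1) 0 then 1 else 0) =
        ∑ j ∈ Finset.range xs.length, if i < j ∧ xs.getD j 0 < xs.getD i 0 then 1 else 0 := by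
    rw [Finset.sum_range_succ']
    simp
  rw [inversions_eq_sum, inversions_eq_sum, List.length_cons, Finset.sum_range_succ']
  simp only [hrest, hfirst]
  omega

theorem inversions_eq_zero_iff (w : List ℕ) : inversions w = 0 ↔ w.Pairwise (· ≤ ·) := by
  induction w with
  | nil => simp
  | cons x xs ih => simp [inversions_cons, List.pairwise_cons, ih]

def crossInversions (a b : List ℕ) : ℕ := (a.map fun x => b.countP (· < x)).sum

theorem inversions_append (a b : List ℕ) :
    inversions (a ++ b) = inversions a + inversions b + crossInversions a b := by
  induction a with
  | nil => simp [crossInversions]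
  | cons x xs ih =>
    simp only [List.cons_append, inversions_cons, crossInversions, List.map_cons, List.sum_cons,
      List.countP_append, ih]
    omega

theorem crossInversions_append_left (a b c : List ℕ) :
    crossInversions (a ++ b) c = crossInversions a c + crossInversions b c := by
  simp [crossInversions]

theorem crossInversions_singleton_left (x : ℕ) (b : List ℕ) :
    crossInversions [x] b = b.countP (· < x) := by
  simp [crossInversions]

theorem crossInversions_eq_zero {a b : List ℕ} (h : ∀ x ∈ a, ∀ y ∈ b, x ≤ y) :
    crossInversions a b = 0 := by
  simp only [crossInversions, List.sum_eq_zero_iff, List.mem_map]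
  rintro _ ⟨x, hx, rfl⟩
  exact List.countP_eq_zero.2 fun y hy => by simpa using h x hx y hy

theorem List.Perm.crossInversions_eq {a a' b b' : List ℕ} (ha : a.Perm a') (hb : b.Perm b') :
    crossInversions a b = crossInversions a' b' := by
  rw [crossInversions, (ha.map _).sum_eq, crossInversions]
  exact congrArg _ (List.map_congr_left fun x _ => hb.countP_eq _)

theorem inversions_append_singleton {l : List ℕ} {m : ℕ} (h : ∀ y ∈ l, y ≤ m) :
    inversions (l ++ [m]) = inversions l := by
  rw [inversions_append, crossInversions_eq_zero (by simpa using h)]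
  simp [inversions_cons]

theorem inversions_append_cons {L R : List ℕ} {m : ℕ} (hL : ∀ y ∈ L, y ≤ m) :
    inversions (L ++ m :: R) =
      inversions L + inversions R + crossInversions L R + R.countP (· < m) := by
  rw [← List.singleton_append, ← List.append_assoc, inversions_append,
    inversions_append_singleton hL, crossInversions_append_left, crossInversions_singleton_left]
  omega

theorem inversions_stackSort_append_cons {L R : List ℕ} {m : ℕ} (hL : ∀ y ∈ L, y < m)
    (hR : ∀ y ∈ R, y ≤ m) :
    inversions (stackSort (L ++ m :: R)) =
      inversions (stackSort L) + inversions (stackSort R) + crossInversions L R := by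
  have hLR : ∀ y ∈ stackSort L ++ stackSort R, y ≤ m := by
    simp only [List.mem_append, (perm_stackSort _).mem_iff]
    rintro y (hy | hy)
    exacts [(hL y hy).le, hR y hy]
  rw [stackSort_append_cons hL hR, inversions_append_singleton hLR, inversions_append,
    (perm_stackSort L).crossInversions_eq (perm_stackSort R)]

theorem inversions_stackSort_le (w : List ℕ) : inversions (stackSort w) ≤ inversions w := by
  induction w using List.induction_append_max_cons with
  | nil => rfl
  | append_cons L m R hL hR ihL ihR =>
    rw [inversions_stackSort_append_cons hL hR, inversions_append_cons fun y hy => (hL y hy).le]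
    omega

theorem pairwise_le_of_inversions_stackSort_eq {w : List ℕ}
    (h : inversions (stackSort w) = inversions w) : w.Pairwise (· ≤ ·) := by
  induction w using List.induction_append_max_cons with
  | nil => exact List.Pairwise.nil
  | append_cons L m R hL hR ihL ihR =>
    rw [inversions_stackSort_append_cons hL hR,
      inversions_append_cons fun y hy => (hL y hy).le] at h
    have hleL := inversions_stackSort_le L
    have hleR := inversions_stackSort_le R
    have hRm : ∀ y ∈ R, m ≤ y := by
      simpa [List.countP_eq_zero] using (show R.countP (· < m) = 0 by omega)
    refine List.pairwise_append.2 ⟨ihL (by omega), List.pairwise_cons.2 ⟨hRm, ihR (by omega)⟩,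
      fun x hx y hy => ?_⟩
    rcases List.mem_cons.1 hy with rfl | hy
    exacts [(hL x hx).le, (hL x hx).le.trans (hRm y hy)]

theorem inversions_stackSort_eq_iff (w : List ℕ) :
    inversions (stackSort w) = inversions w ↔ w.Pairwise (· ≤ ·) := by
  refine ⟨pairwise_le_of_inversions_stackSort_eq, fun h => ?_⟩
  have hle := inversions_stackSort_le w
  rw [(inversions_eq_zero_iff w).2 h] at hle ⊢
  omega

theorem stackSort_inversions (n : ℕ) (w : List ℕ) (hw : IsPermWord n w) :
    inversions (stackSort w) ≤ inversions w ∧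
      (inversions (stackSort w) = inversions w ↔ w = List.range' 1 n) := by
  refine ⟨inversions_stackSort_le w, (inversions_stackSort_eq_iff w).trans ⟨fun h => ?_, ?_⟩⟩
  · exact hw.eq_of_pairwise' h List.pairwise_le_range'
  · rintro rfl
    exact List.pairwise_le_range'
end
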